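/- Fix k ≥ 1 and score functions σ_1,…,σ_k as in the context. If S and S' are both equilibrium states with the same total fill ∑_{i=1}^k S(i) = ∑_{i=1}^k S'(i), then S = S'. -/

import Mathlib

/-!
If two equilibria `S ≠ S'` have the same total fill, some cup `a` is strictly fuller in `S` and
some cup `b` strictly fuller in `S'`; on the half-integer grid this means by at least `1/2`.
Chaining the two equilibrium conditions with monotonicity of the scores gives
`σ_a(S a) < σ_b(S b + 1/2) ≤ σ_b(S' b) < σ_a(S' a + 1/2) ≤ σ_a(S a)`.
-/

/-- `x` is a nonnegative integer multiple of `1/2`. -/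
def Half (x : ℝ) : Prop := ∃ k : ℕ, x = (k : ℝ) / 2

lemma Half.add_half {x : ℝ} (h : Half x) : Half (x + 1 / 2) := by
  obtain ⟨n, rfl⟩ := h
  exact ⟨n + 1, by push_cast; ring⟩

lemma Half.add_half_le_of_lt {x y : ℝ} (hx : Half x) (hy : Half y) (h : x < y) :
    x + 1 / 2 ≤ y := by
  obtain ⟨m, rfl⟩ := hx
  obtain ⟨n, rfl⟩ := hy
  have hmn : (m : ℝ) + 1 ≤ n := by
    exact_mod_cast (div_lt_div_iff_of_pos_right two_pos).mp h
  linarith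

lemma Finset.exists_lt_of_sum_eq_of_ne {ι M : Type*} [Fintype ι] [AddCommMonoid M]
    [LinearOrder M] [IsOrderedCancelAddMonoid M] {f g : ι → M}
    (hsum : ∑ i, f i = ∑ i, g i) (hne : f ≠ g) : ∃ i, f i < g i := by
  by_contra! hle
  exact hne (funext fun i ↦ ((Finset.sum_eq_sum_iff_of_le fun j _ ↦ hle j).mp hsum.symm i
    (Finset.mem_univ i)).symm)

def IsEquilibrium {ι β : Type*} [LT β] (σ : ι → ℝ → β) (S : ι → ℝ) : Prop :=
  ∀ i j, i ≠ j → σ j (S j) < σ i (S i + 1 / 2)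

lemma IsEquilibrium.le_of_lt {ι β : Type*} [Preorder β] {σ : ι → ℝ → β}
    (hmono : ∀ i, StrictMonoOn (σ i) {x : ℝ | Half x}) {S S' : ι → ℝ}
    (hS : ∀ i, Half (S i)) (hS' : ∀ i, Half (S' i))
    (h : IsEquilibrium σ S) (h' : IsEquilibrium σ S') {b : ι} (hb : S b < S' b) (a : ι) :
    S a ≤ S' a := by
  by_contra! ha
  have hab : a ≠ b := by rintro rfl; exact lt_asymm ha hb
  have hb' : σ b (S b + 1 / 2) ≤ σ b (S' b) :=
    (hmono b).monotoneOn (hS b).add_half (hS' b) ((hS b).add_half_le_of_lt (hS' b) hb)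
  have ha' : σ a (S' a + 1 / 2) ≤ σ a (S a) :=
    (hmono a).monotoneOn (hS' a).add_half (hS a) ((hS' a).add_half_le_of_lt (hS a) ha)
  exact lt_irrefl _ <| calc
    σ a (S a) < σ b (S b + 1 / 2) := h b a hab.symm
    _ ≤ σ b (S' b) := hb'
    _ < σ a (S' a + 1 / 2) := h' a b hab
    _ ≤ σ a (S a) := ha'

theorem stmt_8_general (k : ℕ) (σ : Fin k → ℝ → ℕ)
    (hmono : ∀ i, StrictMonoOn (σ i) {x : ℝ | Half x})
    (S S' : Fin k → ℝ) (hS : ∀ i, Half (S i)) (hS' : ∀ i, Half (S' i))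
    (hsum : ∑ i, S i = ∑ i, S' i)
    (heq : ∀ i j : Fin k, i ≠ j → σ j (S j) < σ i (S i + 1 / 2))
    (heq' : ∀ i j : Fin k, i ≠ j → σ j (S' j) < σ i (S' i + 1 / 2)) :
    S = S' := by
  by_contra hne
  obtain ⟨b, hb⟩ := Finset.exists_lt_of_sum_eq_of_ne hsum hne
  obtain ⟨a, ha⟩ := Finset.exists_lt_of_sum_eq_of_ne hsum.symm (Ne.symm hne)
  exact (IsEquilibrium.le_of_lt hmono hS hS' heq heq' hb a).not_gt ha

/-- Uniqueness of equilibrium states: two equilibrium states for the same score functions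
with the same total fill are equal. -/
theorem stmt_8 (k : ℕ) (hk : 1 ≤ k) (σ : Fin k → ℝ → ℕ)
    (hmono : ∀ i, StrictMonoOn (σ i) {x : ℝ | Half x})
    (hinj : ∀ i v i' v', Half v → Half v' → σ i v = σ i' v' → i = i' ∧ v = v')
    (S S' : Fin k → ℝ) (hS : ∀ i, Half (S i)) (hS' : ∀ i, Half (S' i))
    (hsum : ∑ i, S i = ∑ i, S' i)
    (heq : ∀ i j : Fin k, i ≠ j → σ j (S j) < σ i (S i + 1 / 2))
    (heq' : ∀ i j : Fin k, i ≠ j → σ j (S' j) < σ i (S' i + 1 / 2)) :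
    S = S' :=
  stmt_8_general k σ hmono S S' hS hS' hsum heq heq'
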